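/- arXiv:1301.6783 — 5 statements merged into one kernel-verified Lean document; each statement's English description precedes it below -/
import Mathlib

section
/- Let (Z, 𝒵, ω) be a probability space and (κ_t)_{t≥0} a Markov semigroup on Z leaving ω invariant. Let f : Z → ℝ be bounded measurable and suppose g : Z → ℝ is a measurable function such that for ω-almost every z, (1/T)∫₀ᵀ (G_t f)(z) dt → g(z) as T → +∞. Then g is ω-a.e. equal to the conditional expectation E_ω(f | σ(𝓘)), where σ(𝓘) is the σ-algebra generated by the invariant sets of the semigroup. -/
open MeasureTheory ProbabilityTheory Filter

/-- A Markov semigroup on a probability space `(Z, ω)`: a family of Markov kernels indexed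
by `t ≥ 0` satisfying the Chapman–Kolmogorov semigroup law, joint measurability of
`(t, z) ↦ κ_t(z, A)`, and invariance of `ω`. -/
structure IsMarkovSemigroup {Z : Type*} [MeasurableSpace Z] (ω : Measure Z)
    (κ : ℝ → ProbabilityTheory.Kernel Z Z) : Prop where
  markov : ∀ t : ℝ, 0 ≤ t → IsMarkovKernel (κ t)
  semigroup : ∀ s t : ℝ, 0 ≤ s → 0 ≤ t → κ (s + t) = (κ s).comp (κ t)
  jointMeasurable : ∀ A : Set Z, MeasurableSet A →
    Measurable (fun p : ℝ × Z => κ p.1 p.2 A)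
  invariant : ∀ t : ℝ, 0 ≤ t → ∀ A : Set Z, MeasurableSet A →
    ∫⁻ z, κ t z A ∂ω = ω A

/-- A measurable set `A` is invariant for the semigroup if `κ_t(z, A) = 1_A(z)` for
ω-a.e. `z`, for every `t ≥ 0`. -/
def IsInvariantSet {Z : Type*} [MeasurableSpace Z] (ω : Measure Z)
    (κ : ℝ → ProbabilityTheory.Kernel Z Z) (A : Set Z) : Prop :=
  MeasurableSet A ∧ ∀ t : ℝ, 0 ≤ t →
    (fun z => κ t z A) =ᵐ[ω] A.indicator (fun _ => (1 : ENNReal))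

open Set Topology

/-!
Write `A_T f = T⁻¹ ∫₀ᵀ G_t f dt`. Applying `G_s` to `A_T f` gives the average of `G_t f` over
`[s, s + T]`, which has the same limit, so the limit `g` is a fixed point of every `G_s`.
A bounded fixed point `h` of `G_s` has zero variance under `κ_s(z, ·)` for a.e. `z`, because by
invariance of `ω` this variance integrates to `∫ G_s (h²) dω - ∫ h² dω = 0`; hence the level sets
of `g` are invariant and `g` is measurable for the invariant σ-algebra `𝓘`. For `A ∈ 𝓘`,
invariance of `ω` gives `∫_A G_t f = ∫_A f`, so `∫_A A_T f = ∫_A f` for all `T`, and dominated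
convergence yields `∫_A g = ∫_A f`. The invariant sets already form a σ-algebra, so these two
facts identify `g` with `E_ω(f | 𝓘)`.
-/

theorem measure_eq_indicator_one_iff_ae_mem_iff {α : Type*} [MeasurableSpace α] {μ : Measure α}
    [IsProbabilityMeasure μ] {A : Set α} (hA : MeasurableSet A) (z : α) :
    μ A = A.indicator (fun _ => 1) z ↔ ∀ᵐ y ∂μ, (y ∈ A ↔ z ∈ A) := by
  by_cases hz : z ∈ A
  · simp [hz, ← mem_ae_iff_prob_eq_one hA, Filter.Eventually]
  · simp [hz, measure_eq_zero_iff_ae_notMem]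

theorem exists_measurable_bounded_ae_eq {α : Type*} [MeasurableSpace α] {μ : Measure α} [NeZero μ]
    {g : α → ℝ} (hg : Measurable g) {C : ℝ} (hgC : ∀ᵐ z ∂μ, ‖g z‖ ≤ C) :
    ∃ g' : α → ℝ, Measurable g' ∧ (∀ z, ‖g' z‖ ≤ C) ∧ g =ᵐ[μ] g' := by
  obtain ⟨z₀, hz₀⟩ := hgC.exists
  refine ⟨{z | ‖g z‖ ≤ C}.indicator g,
    hg.indicator (measurableSet_le hg.norm measurable_const), fun z => ?_, ?_⟩
  · by_cases h : ‖g z‖ ≤ C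
    · rwa [indicator_of_mem (s := {z | ‖g z‖ ≤ C}) h]
    · rw [indicator_of_notMem (s := {z | ‖g z‖ ≤ C}) h, norm_zero]
      exact (norm_nonneg _).trans hz₀
  · filter_upwards [hgC] with z hz using (indicator_of_mem (s := {z | ‖g z‖ ≤ C}) hz g).symm

theorem tendsto_inv_mul_intervalIntegral_add_const {φ : ℝ → ℝ} {L t : ℝ} (ht : 0 ≤ t)
    (hφ : ∀ T, 0 ≤ T → IntervalIntegrable φ volume 0 T)
    (h : Tendsto (fun T => T⁻¹ * ∫ s in (0:ℝ)..T, φ s) atTop (𝓝 L)) :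
    Tendsto (fun T => T⁻¹ * ∫ s in t..T + t, φ s) atTop (𝓝 L) := by
  have hratio : Tendsto (fun T : ℝ => (T + t) / T) atTop (𝓝 1) := by
    have := (tendsto_const_nhds (x := (1:ℝ))).add (tendsto_const_nhds (x := t).div_atTop tendsto_id)
    rw [add_zero] at this
    refine this.congr' ?_
    filter_upwards [eventually_gt_atTop 0] with T hT
    simp [add_div, hT.ne']
  have hhead : Tendsto (fun T : ℝ => T⁻¹ * ∫ s in (0:ℝ)..t, φ s) atTop (𝓝 0) := by
    simpa using tendsto_inv_atTop_zero.mul_const (∫ s in (0:ℝ)..t, φ s)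
  have hshift := h.comp (tendsto_atTop_add_const_right atTop t tendsto_id)
  have := (hratio.mul hshift).sub hhead
  rw [one_mul, sub_zero] at this
  refine this.congr' ?_
  filter_upwards [eventually_gt_atTop 0] with T hT
  have hTt : 0 < T + t := by linarith
  simp only [Function.comp_apply, id]
  rw [← intervalIntegral.integral_interval_sub_left (hφ _ hTt.le) (hφ t ht)]
  field_simp

noncomputable def timeAverage {Z : Type*} [MeasurableSpace Z] (κ : ℝ → Kernel Z Z) (f : Z → ℝ)
    (T : ℝ) (z : Z) : ℝ :=
  T⁻¹ * ∫ t in (0:ℝ)..T, ∫ y, f y ∂κ t z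

namespace IsMarkovSemigroup

variable {Z : Type*} [MeasurableSpace Z] {ω : Measure Z} {κ : ℝ → Kernel Z Z} {t : ℝ}

section

variable {E : Type*} [NormedAddCommGroup E] [NormedSpace ℝ E]

theorem comp_measure_eq (hκ : IsMarkovSemigroup ω κ) (ht : 0 ≤ t) : κ t ∘ₘ ω = ω :=
  Measure.ext fun A hA => by
    rw [Measure.bind_apply hA (κ t).aemeasurable, hκ.invariant t ht A hA]

theorem ae_ae_of_ae (hκ : IsMarkovSemigroup ω κ) (ht : 0 ≤ t) {p : Z → Prop}
    (hp : ∀ᵐ z ∂ω, p z) : ∀ᵐ z ∂ω, ∀ᵐ y ∂κ t z, p y := by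
  rw [← hκ.comp_measure_eq ht] at hp
  exact Measure.ae_ae_of_ae_comp hp

theorem integral_integral_eq (hκ : IsMarkovSemigroup ω κ) (ht : 0 ≤ t) {f : Z → E}
    (hf : Integrable f ω) : ∫ z, ∫ y, f y ∂κ t z ∂ω = ∫ z, f z ∂ω := by
  have := hκ.markov t ht
  rw [← hκ.comp_measure_eq ht] at hf
  conv_rhs => rw [← hκ.comp_measure_eq ht]
  rw [Measure.comp_eq_comp_const_apply] at hf ⊢
  exact (Kernel.integral_comp hf).symm

theorem integral_integral_eq_integral_add (hκ : IsMarkovSemigroup ω κ) {s : ℝ} (hs : 0 ≤ s)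
    (ht : 0 ≤ t) {f : Z → E} {z : Z} (hf : Integrable f (κ (s + t) z)) :
    ∫ y, ∫ w, f w ∂κ s y ∂κ t z = ∫ w, f w ∂κ (s + t) z := by
  have := hκ.markov s hs
  have := hκ.markov t ht
  rw [hκ.semigroup s t hs ht] at hf ⊢
  exact (Kernel.integral_comp hf).symm

theorem norm_integral_le (hκ : IsMarkovSemigroup ω κ) (ht : 0 ≤ t) {f : Z → E} {C : ℝ}
    (hC : ∀ z, ‖f z‖ ≤ C) (z : Z) : ‖∫ y, f y ∂κ t z‖ ≤ C := by
  have := hκ.markov t ht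
  simpa using norm_integral_le_of_norm_le_const (μ := κ t z) (ae_of_all _ hC)

theorem stronglyMeasurable_integral (hκ : IsMarkovSemigroup ω κ) {f : Z → E}
    (hf : StronglyMeasurable f) : StronglyMeasurable fun p : ℝ × Z => ∫ y, f y ∂κ p.1 p.2 :=
  hf.integral_kernel (κ := ⟨fun p : ℝ × Z => κ p.1 p.2,
    Measure.measurable_of_measurable_coe _ fun A hA => hκ.jointMeasurable A hA⟩)


theorem isInvariantSet_iff (hκ : IsMarkovSemigroup ω κ) {A : Set Z} :
    IsInvariantSet ω κ A ↔
      MeasurableSet A ∧ ∀ t, 0 ≤ t → ∀ᵐ z ∂ω, ∀ᵐ y ∂κ t z, (y ∈ A ↔ z ∈ A) := by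
  refine and_congr_right fun hA => forall₂_congr fun t ht => ?_
  have := hκ.markov t ht
  exact eventually_congr (ae_of_all _ fun z => measure_eq_indicator_one_iff_ae_mem_iff hA z)

@[reducible]
def invariantMeasurableSpace (hκ : IsMarkovSemigroup ω κ) : MeasurableSpace Z where
  MeasurableSet' := IsInvariantSet ω κ
  measurableSet_empty := hκ.isInvariantSet_iff.2
    ⟨MeasurableSet.empty, fun _ _ => ae_of_all _ fun _ => ae_of_all _ fun _ => Iff.rfl⟩
  measurableSet_compl A hA := by
    obtain ⟨hAm, hAinv⟩ := hκ.isInvariantSet_iff.1 hA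
    refine hκ.isInvariantSet_iff.2 ⟨hAm.compl, fun t ht => ?_⟩
    filter_upwards [hAinv t ht] with z hz
    filter_upwards [hz] with y hy using not_congr hy
  measurableSet_iUnion A hA := by
    have hA' := fun n => hκ.isInvariantSet_iff.1 (hA n)
    refine hκ.isInvariantSet_iff.2 ⟨MeasurableSet.iUnion fun n => (hA' n).1, fun t ht => ?_⟩
    filter_upwards [ae_all_iff.2 fun n => (hA' n).2 t ht] with z hz
    filter_upwards [ae_all_iff.2 hz] with y hy
    simp only [mem_iUnion]
    exact exists_congr hy

theorem generateFrom_isInvariantSet (hκ : IsMarkovSemigroup ω κ) :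
    MeasurableSpace.generateFrom {A | IsInvariantSet ω κ A} = hκ.invariantMeasurableSpace :=
  @MeasurableSpace.generateFrom_measurableSet _ hκ.invariantMeasurableSpace

theorem invariantMeasurableSpace_le (hκ : IsMarkovSemigroup ω κ) :
    hκ.invariantMeasurableSpace ≤ ‹MeasurableSpace Z› :=
  fun _ hA => hA.1

theorem measurable_invariantMeasurableSpace {β : Type*} [MeasurableSpace β]
    (hκ : IsMarkovSemigroup ω κ) {h : Z → β} (hh : Measurable h)
    (h_const : ∀ t, 0 ≤ t → ∀ᵐ z ∂ω, ∀ᵐ y ∂κ t z, h y = h z) :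
    Measurable[hκ.invariantMeasurableSpace] h := fun B hB =>
  hκ.isInvariantSet_iff.2 ⟨hh hB, fun t ht => by
    filter_upwards [h_const t ht] with z hz
    filter_upwards [hz] with y hy
    simp only [mem_preimage, hy]⟩

theorem setIntegral_integral_eq (hκ : IsMarkovSemigroup ω κ) (ht : 0 ≤ t) {A : Set Z}
    (hA : IsInvariantSet ω κ A) {f : Z → E} (hf : Integrable f ω) :
    ∫ z in A, ∫ y, f y ∂κ t z ∂ω = ∫ z in A, f z ∂ω := by
  obtain ⟨hAm, hAinv⟩ := hκ.isInvariantSet_iff.1 hA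
  have h_indicator : (fun z => ∫ y, A.indicator f y ∂κ t z)
      =ᵐ[ω] A.indicator (fun z => ∫ y, f y ∂κ t z) := by
    filter_upwards [hAinv t ht] with z hz
    by_cases hzA : z ∈ A
    · rw [indicator_of_mem hzA]
      exact integral_congr_ae (hz.mono fun y hy => indicator_of_mem (hy.2 hzA) f)
    · rw [indicator_of_notMem hzA]
      exact integral_eq_zero_of_ae (hz.mono fun y hy => indicator_of_notMem (mt hy.1 hzA) f)
  rw [← integral_indicator hAm, ← integral_congr_ae h_indicator,
    hκ.integral_integral_eq ht (hf.indicator hAm), integral_indicator hAm]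

end

theorem ae_ae_eq_of_integral_ae_eq [IsFiniteMeasure ω] (hκ : IsMarkovSemigroup ω κ)
    (ht : 0 ≤ t) {h : Z → ℝ} (hh : Measurable h) {C : ℝ} (hC : ∀ z, ‖h z‖ ≤ C)
    (h_fixed : (fun z => ∫ y, h y ∂κ t z) =ᵐ[ω] h) :
    ∀ᵐ z ∂ω, ∀ᵐ y ∂κ t z, h y = h z := by
  have := hκ.markov t ht
  have hL2 : ∀ z, MemLp h 2 (κ t z) := fun z =>
    MemLp.of_bound hh.aestronglyMeasurable C (ae_of_all _ hC)
  have hsq_bound : ∀ z, ‖h z ^ 2‖ ≤ C ^ 2 := fun z => by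
    rw [norm_pow]
    exact pow_le_pow_left₀ (norm_nonneg _) (hC z) 2
  have hsq : Integrable (fun z => h z ^ 2) ω :=
    Integrable.of_bound (hh.pow_const 2).aestronglyMeasurable _ (ae_of_all _ hsq_bound)
  have hGsq : Integrable (fun z => ∫ y, h y ^ 2 ∂κ t z) ω :=
    Integrable.of_bound ((hh.pow_const 2).stronglyMeasurable.integral_kernel).aestronglyMeasurable
      _ (ae_of_all _ (hκ.norm_integral_le ht hsq_bound))
  have hvar : (fun z => Var[h; κ t z]) =ᵐ[ω] fun z => ∫ y, h y ^ 2 ∂κ t z - h z ^ 2 := by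
    filter_upwards [h_fixed] with z hz
    rw [variance_eq_sub (hL2 z), hz]
    rfl
  have hvar_int : ∫ z, Var[h; κ t z] ∂ω = 0 := by
    rw [integral_congr_ae hvar, integral_sub hGsq hsq, hκ.integral_integral_eq ht hsq, sub_self]
  have hvar_zero : ∀ᵐ z ∂ω, Var[h; κ t z] = 0 :=
    (integral_eq_zero_iff_of_nonneg (fun z => variance_nonneg _ _)
      ((hGsq.sub hsq).congr hvar.symm)).1 hvar_int
  filter_upwards [hvar_zero, h_fixed] with z hz hfz
  simpa [hfz] using ae_eq_integral_of_variance_eq_zero (hL2 z) hz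

variable {f g : Z → ℝ} {C : ℝ}

theorem stronglyMeasurable_timeAverage (hκ : IsMarkovSemigroup ω κ) (hf : Measurable f) (T : ℝ) :
    StronglyMeasurable (timeAverage κ f T) := by
  have hG := hκ.stronglyMeasurable_integral hf.stronglyMeasurable
  exact stronglyMeasurable_const.mul (hG.integral_prod_left'.sub hG.integral_prod_left')

theorem norm_timeAverage_le (hκ : IsMarkovSemigroup ω κ) (hC : ∀ z, ‖f z‖ ≤ C) {T : ℝ}
    (hT : 0 < T) (z : Z) : ‖timeAverage κ f T z‖ ≤ C := by
  have h_int : ‖∫ t in (0:ℝ)..T, ∫ y, f y ∂κ t z‖ ≤ C * |T - 0| :=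
    intervalIntegral.norm_integral_le_of_norm_le_const fun t ht =>
      hκ.norm_integral_le (by rw [uIoc_of_le hT.le] at ht; exact ht.1.le) hC z
  rw [sub_zero, abs_of_pos hT] at h_int
  rw [timeAverage, norm_mul, norm_inv, Real.norm_of_nonneg hT.le]
  calc T⁻¹ * ‖∫ t in (0:ℝ)..T, ∫ y, f y ∂κ t z‖ ≤ T⁻¹ * (C * T) := by gcongr
    _ = C := by field_simp

theorem integral_timeAverage (hκ : IsMarkovSemigroup ω κ) (hf : Measurable f)
    (hC : ∀ z, ‖f z‖ ≤ C) {μ : Measure Z} [IsFiniteMeasure μ] {T : ℝ} (hT : 0 ≤ T) :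
    ∫ z, timeAverage κ f T z ∂μ = T⁻¹ * ∫ t in (0:ℝ)..T, ∫ z, ∫ y, f y ∂κ t z ∂μ := by
  have h_int : Integrable (Function.uncurry fun t z => ∫ y, f y ∂κ t z)
      ((volume.restrict (uIoc 0 T)).prod μ) := by
    rw [uIoc_of_le hT]
    refine .of_bound (hκ.stronglyMeasurable_integral hf.stronglyMeasurable).aestronglyMeasurable
      C ?_
    exact Measure.quasiMeasurePreserving_fst.ae (ae_restrict_mem measurableSet_Ioc) |>.mono
      fun p hp => hκ.norm_integral_le hp.1.le hC p.2
  simp only [timeAverage]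
  rw [integral_const_mul, intervalIntegral_integral_swap h_int]

theorem tendsto_integral_timeAverage (hκ : IsMarkovSemigroup ω κ) (hf : Measurable f)
    (hC : ∀ z, ‖f z‖ ≤ C) {μ : Measure Z} [IsFiniteMeasure μ]
    (hlim : ∀ᵐ z ∂μ, Tendsto (timeAverage κ f · z) atTop (𝓝 (g z))) :
    Tendsto (fun T => ∫ z, timeAverage κ f T z ∂μ) atTop (𝓝 (∫ z, g z ∂μ)) :=
  tendsto_integral_filter_of_dominated_convergence (fun _ => C)
    (.of_forall fun T => (hκ.stronglyMeasurable_timeAverage hf T).aestronglyMeasurable)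
    ((eventually_gt_atTop 0).mono fun _ hT => ae_of_all _ (hκ.norm_timeAverage_le hC hT))
    (integrable_const C) hlim

theorem integral_timeAverage_kernel (hκ : IsMarkovSemigroup ω κ) (hf : Measurable f)
    (hC : ∀ z, ‖f z‖ ≤ C) (ht : 0 ≤ t) {T : ℝ} (hT : 0 ≤ T) (z : Z) :
    ∫ y, timeAverage κ f T y ∂κ t z = T⁻¹ * ∫ s in t..T + t, ∫ y, f y ∂κ s z := by
  have := hκ.markov t ht
  have h_shift := intervalIntegral.integral_comp_add_right (fun s => ∫ y, f y ∂κ s z) t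
    (a := 0) (b := T)
  rw [zero_add] at h_shift
  rw [hκ.integral_timeAverage hf hC hT, ← h_shift]
  refine congrArg _ (intervalIntegral.integral_congr fun s hs => ?_)
  rw [uIcc_of_le hT] at hs
  have := hκ.markov (s + t) (by linarith [hs.1])
  exact hκ.integral_integral_eq_integral_add hs.1 ht
    (Integrable.of_bound hf.aestronglyMeasurable C (ae_of_all _ hC))

theorem integral_ae_eq_of_tendsto_timeAverage (hκ : IsMarkovSemigroup ω κ) (hf : Measurable f)
    (hC : ∀ z, ‖f z‖ ≤ C) (hlim : ∀ᵐ z ∂ω, Tendsto (timeAverage κ f · z) atTop (𝓝 (g z)))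
    (ht : 0 ≤ t) : (fun z => ∫ y, g y ∂κ t z) =ᵐ[ω] g := by
  have := hκ.markov t ht
  filter_upwards [hκ.ae_ae_of_ae ht hlim, hlim] with z hz_kernel hz
  have h_shift := tendsto_inv_mul_intervalIntegral_add_const ht (fun T hT => ?_) hz
  · refine tendsto_nhds_unique ((hκ.tendsto_integral_timeAverage hf hC hz_kernel).congr' ?_) h_shift
    filter_upwards [eventually_ge_atTop 0] with T hT
    exact hκ.integral_timeAverage_kernel hf hC ht hT z
  · refine (intervalIntegrable_iff_integrableOn_Ioc_of_le hT).2
      (.of_bound measure_Ioc_lt_top ?_ C ?_)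
    · exact ((hκ.stronglyMeasurable_integral hf.stronglyMeasurable).comp_measurable
        (measurable_id.prodMk measurable_const)).aestronglyMeasurable
    · filter_upwards [ae_restrict_mem measurableSet_Ioc] with s hs
      exact hκ.norm_integral_le hs.1.le hC z

theorem setIntegral_timeAverage [IsFiniteMeasure ω] (hκ : IsMarkovSemigroup ω κ)
    (hf : Measurable f) (hC : ∀ z, ‖f z‖ ≤ C) {A : Set Z} (hA : IsInvariantSet ω κ A) {T : ℝ}
    (hT : 0 < T) : ∫ z in A, timeAverage κ f T z ∂ω = ∫ z in A, f z ∂ω := by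
  have hf_int : Integrable f ω := Integrable.of_bound hf.aestronglyMeasurable C (ae_of_all _ hC)
  rw [hκ.integral_timeAverage hf hC hT.le]
  have : ∀ s ∈ uIcc 0 T, ∫ z in A, ∫ y, f y ∂κ s z ∂ω = ∫ z in A, f z ∂ω := fun s hs => by
    rw [uIcc_of_le hT.le] at hs
    exact hκ.setIntegral_integral_eq hs.1 hA hf_int
  rw [intervalIntegral.integral_congr this, intervalIntegral.integral_const, sub_zero, smul_eq_mul,
    inv_mul_cancel_left₀ hT.ne']

theorem setIntegral_eq_of_tendsto_timeAverage [IsFiniteMeasure ω] (hκ : IsMarkovSemigroup ω κ)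
    (hf : Measurable f) (hC : ∀ z, ‖f z‖ ≤ C) {A : Set Z} (hA : IsInvariantSet ω κ A)
    (hlim : ∀ᵐ z ∂ω, Tendsto (timeAverage κ f · z) atTop (𝓝 (g z))) :
    ∫ z in A, g z ∂ω = ∫ z in A, f z ∂ω :=
  tendsto_nhds_unique (hκ.tendsto_integral_timeAverage hf hC (ae_restrict_of_ae hlim))
    (tendsto_const_nhds.congr' ((eventually_gt_atTop 0).mono fun _ hT =>
      (hκ.setIntegral_timeAverage hf hC hA hT).symm))

theorem measurable_invariantMeasurableSpace_of_tendsto_timeAverage [IsFiniteMeasure ω]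
    (hκ : IsMarkovSemigroup ω κ) (hf : Measurable f) (hC : ∀ z, ‖f z‖ ≤ C) (hg : Measurable g)
    {C' : ℝ} (hgC : ∀ z, ‖g z‖ ≤ C')
    (hlim : ∀ᵐ z ∂ω, Tendsto (timeAverage κ f · z) atTop (𝓝 (g z))) :
    Measurable[hκ.invariantMeasurableSpace] g :=
  hκ.measurable_invariantMeasurableSpace hg fun _ ht => hκ.ae_ae_eq_of_integral_ae_eq ht hg hgC
    (hκ.integral_ae_eq_of_tendsto_timeAverage hf hC hlim ht)

end IsMarkovSemigroup

/-- If the time averages `(1/T) ∫₀ᵀ (G_t f)(z) dt` of a bounded measurable `f` converge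
a.e. to a limit function `g`, then `g` is a.e. equal to the conditional expectation of `f`
with respect to the σ-algebra generated by the invariant sets of the semigroup. -/
theorem markov_semigroup_time_average_eq_condexp
    {Z : Type*} [mZ : MeasurableSpace Z] (ω : Measure Z) [IsProbabilityMeasure ω]
    (κ : ℝ → ProbabilityTheory.Kernel Z Z) (hκ : IsMarkovSemigroup ω κ)
    (f : Z → ℝ) (hf : Measurable f) (hfb : ∃ C : ℝ, ∀ z, |f z| ≤ C)
    (g : Z → ℝ) (hg : Measurable g)
    (hlim : ∀ᵐ z ∂ω, Tendsto (fun T : ℝ => (1 / T) * ∫ t in (0:ℝ)..T, (∫ y, f y ∂(κ t z)))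
        atTop (nhds (g z))) :
    g =ᵐ[ω] ω[f | MeasurableSpace.generateFrom {A : Set Z | IsInvariantSet ω κ A}] := by
  obtain ⟨C, hC⟩ := hfb
  have hfC : ∀ z, ‖f z‖ ≤ C := by simpa only [Real.norm_eq_abs] using hC
  have hlim' : ∀ᵐ z ∂ω, Tendsto (timeAverage κ f · z) atTop (𝓝 (g z)) := by
    simpa only [timeAverage, one_div] using hlim
  have hgC : ∀ᵐ z ∂ω, ‖g z‖ ≤ C := hlim'.mono fun z hz => le_of_tendsto hz.norm
    ((eventually_gt_atTop 0).mono fun _ hT => hκ.norm_timeAverage_le hfC hT z)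
  obtain ⟨g', hg'm, hg'C, hgg'⟩ := exists_measurable_bounded_ae_eq hg hgC
  have hlim_g' : ∀ᵐ z ∂ω, Tendsto (timeAverage κ f · z) atTop (𝓝 (g' z)) := by
    filter_upwards [hlim', hgg'] with z hz hz' using hz' ▸ hz
  rw [hκ.generateFrom_isInvariantSet]
  refine ae_eq_condExp_of_forall_setIntegral_eq hκ.invariantMeasurableSpace_le
    (Integrable.of_bound hf.aestronglyMeasurable C (ae_of_all _ hfC))
    (fun s _ _ => ((Integrable.of_bound hg'm.aestronglyMeasurable C (ae_of_all _ hg'C)).congr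
      hgg'.symm).integrableOn)
    (fun s hs _ => hκ.setIntegral_eq_of_tendsto_timeAverage hf hfC hs hlim')
    ⟨g', ?_, hgg'⟩
  exact (hκ.measurable_invariantMeasurableSpace_of_tendsto_timeAverage hf hfC hg'm hg'C
    hlim_g').stronglyMeasurable
end

section
/- Let n ≥ 1 and let Z, W be real n×n matrices such that (i) W maps the kernel of Z into the orthogonal complement of the range of Z, i.e. ⟨Wv, Zu⟩ = 0 for all v ∈ ker Z and all u ∈ ℝⁿ, and (ii) ker Z ∩ ker W = {0}. Then there exists C > 0 such that for every real c with |c| > C the matrix W + c·Z is invertible. -/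
/-!
Suppose `(W + c Z) x = 0`. Pairing with `Z x` gives `⟪W x, Z x⟫ = -c ‖Z x‖²`. The component of `x`
in `ker Z` contributes nothing to `⟪W x, Z x⟫` by hypothesis, while on `(ker Z)ᗮ` the map `Z` is
injective, hence bounded below; so `|⟪W x, Z x⟫| ≤ M ‖Z x‖²` for a constant `M`. For `|c| > M`
this forces `Z x = 0`, then `W x = 0`, and finally `x = 0`.
-/

open scoped RealInnerProductSpace NNReal

namespace ContinuousLinearMap

variable {E F : Type*} [NormedAddCommGroup E] [InnerProductSpace ℝ E] [FiniteDimensional ℝ E]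
  [NormedAddCommGroup F] [InnerProductSpace ℝ F]

theorem exists_norm_le_mul_norm_of_mem_orthogonal_ker (Z : E →L[ℝ] F) :
    ∃ K : ℝ≥0, ∀ x ∈ (LinearMap.ker (Z : E →ₗ[ℝ] F))ᗮ, ‖x‖ ≤ K * ‖Z x‖ := by
  set V := (LinearMap.ker (Z : E →ₗ[ℝ] F))ᗮ
  have hinj : LinearMap.ker ((Z : E →ₗ[ℝ] F) ∘ₗ V.subtype) = ⊥ := by
    rw [LinearMap.ker_eq_bot']
    intro x hx
    exact Subtype.ext <| Submodule.disjoint_def.mp (Submodule.orthogonal_disjoint _) (x : E) hx x.2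
  obtain ⟨K, -, hK⟩ := LinearMap.exists_antilipschitzWith _ hinj
  refine ⟨K, fun x hx => ?_⟩
  simpa using hK.le_mul_dist ⟨x, hx⟩ 0

theorem exists_abs_inner_le_mul_norm_sq (Z W : E →L[ℝ] F)
    (h : ∀ v, Z v = 0 → ∀ u, ⟪W v, Z u⟫ = 0) :
    ∃ M : ℝ, 0 ≤ M ∧ ∀ x, |⟪W x, Z x⟫| ≤ M * ‖Z x‖ ^ 2 := by
  obtain ⟨K, hK⟩ := Z.exists_norm_le_mul_norm_of_mem_orthogonal_ker
  refine ⟨‖W‖ * K, by positivity, fun x => ?_⟩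
  set P := (LinearMap.ker (Z : E →ₗ[ℝ] F)).starProjection x
  set x₁ := x - P
  have hP : Z P = 0 := (LinearMap.ker (Z : E →ₗ[ℝ] F)).starProjection_apply_mem x
  have hZx : Z x = Z x₁ := by simp [x₁, hP]
  have hx : ⟪W x, Z x⟫ = ⟪W x₁, Z x₁⟫ := by
    rw [hZx, show x = P + x₁ by simp [x₁], map_add, inner_add_left, h P hP, zero_add]
  calc |⟪W x, Z x⟫| = |⟪W x₁, Z x₁⟫| := by rw [hx]
    _ ≤ ‖W x₁‖ * ‖Z x₁‖ := abs_real_inner_le_norm _ _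
    _ ≤ ‖W‖ * ‖x₁‖ * ‖Z x₁‖ := by gcongr; exact W.le_opNorm x₁
    _ ≤ ‖W‖ * (K * ‖Z x₁‖) * ‖Z x₁‖ := by
        gcongr; exact hK x₁ ((LinearMap.ker (Z : E →ₗ[ℝ] F)).sub_starProjection_mem_orthogonal x)
    _ = ‖W‖ * K * ‖Z x‖ ^ 2 := by rw [hZx]; ring

theorem exists_forall_lt_abs_eq_zero_of_add_smul_eq_zero (Z W : E →L[ℝ] F)
    (h₁ : ∀ v, Z v = 0 → ∀ u, ⟪W v, Z u⟫ = 0) (h₂ : ∀ v, Z v = 0 → W v = 0 → v = 0) :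
    ∃ C : ℝ, 0 < C ∧ ∀ c : ℝ, C < |c| → ∀ x, W x + c • Z x = 0 → x = 0 := by
  obtain ⟨M, hM, hWZ⟩ := Z.exists_abs_inner_le_mul_norm_sq W h₁
  refine ⟨M + 1, by positivity, fun c hc x hx => ?_⟩
  have hW : W x = -(c • Z x) := eq_neg_of_add_eq_zero_left hx
  have hZ : Z x = 0 := by
    by_contra hne
    have hbound : |c| * ‖Z x‖ ^ 2 ≤ M * ‖Z x‖ ^ 2 := by
      simpa [hW, inner_smul_left, real_inner_self_eq_norm_sq, abs_mul] using hWZ x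
    have : |c| ≤ M := le_of_mul_le_mul_right hbound (by positivity)
    linarith
  exact h₂ x hZ (by simpa [hZ] using hW)

end ContinuousLinearMap

open Matrix WithLp in
theorem exists_invertible_large_shift_general
    {n : ℕ} (Z W : Matrix (Fin n) (Fin n) ℝ)
    (h1 : ∀ v u : Fin n → ℝ, Z.mulVec v = 0 →
      dotProduct (W.mulVec v) (Z.mulVec u) = 0)
    (h2 : ∀ v : Fin n → ℝ, Z.mulVec v = 0 → W.mulVec v = 0 → v = 0) :
    ∃ C : ℝ, 0 < C ∧ ∀ c : ℝ, C < |c| → (W + c • Z).det ≠ 0 := by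
  obtain ⟨C, hC, hinj⟩ :=
    (toEuclideanCLM (𝕜 := ℝ) Z).exists_forall_lt_abs_eq_zero_of_add_smul_eq_zero
      (toEuclideanCLM (𝕜 := ℝ) W)
      (fun v hv u => by
        simpa [inner_toEuclideanCLM] using h1 (ofLp v) (ofLp u) (congrArg ofLp hv))
      (fun v hZ hW => congrArg (toLp 2) (h2 (ofLp v) (congrArg ofLp hZ) (congrArg ofLp hW)))
  refine ⟨C, hC, fun c hc hdet => ?_⟩
  obtain ⟨v, hv0, hv⟩ := exists_mulVec_eq_zero_iff.mpr hdet
  refine hv0 (congrArg ofLp (hinj c hc (toLp 2 v) ?_))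
  simpa [add_mulVec, smul_mulVec] using congrArg (toLp 2) hv

/-- Let `Z, W` be real `n×n` matrices such that (i) `W` maps `ker Z` into the orthogonal
complement of the range of `Z`, and (ii) `ker Z ∩ ker W = {0}`.  Then `W + c·Z` is
invertible for all real `c` with `|c|` large enough. -/
theorem exists_invertible_large_shift
    {n : ℕ} (hn : 1 ≤ n) (Z W : Matrix (Fin n) (Fin n) ℝ)
    (h1 : ∀ v u : Fin n → ℝ, Z.mulVec v = 0 →
      dotProduct (W.mulVec v) (Z.mulVec u) = 0)
    (h2 : ∀ v : Fin n → ℝ, Z.mulVec v = 0 → W.mulVec v = 0 → v = 0) :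
    ∃ C : ℝ, 0 < C ∧ ∀ c : ℝ, C < |c| → (W + c • Z).det ≠ 0 :=
  exists_invertible_large_shift_general Z W h1 h2
end

section
/- Let n ≥ 1 and let Z, W be real n×n matrices such that Zᵀ·W = Wᵀ·Z (i.e. ZᵀW is symmetric) and ker Z ∩ ker W = {0}. Then the set {c ∈ ℝ : det(W + c·Z) = 0} contains at most n elements; in particular W + c·Z is invertible for all but at most n real values of c. -/
open Polynomial Matrix

/-- The Gram matrix `WᵀW + ZᵀZ` has nonzero determinant when `ker Z ∩ ker W = 0`. -/
lemma gram_det_ne_zero_of_trivial_kernel {n : ℕ} (Z W : Matrix (Fin n) (Fin n) ℝ)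
    (hker : ∀ v : Fin n → ℝ, Z.mulVec v = 0 → W.mulVec v = 0 → v = 0) :
    (W.transpose * W + Z.transpose * Z).det ≠ 0 := by
  intro h
  rw [← Matrix.exists_mulVec_eq_zero_iff] at h
  obtain ⟨v, hv, hSv⟩ := h
  have hq : (W *ᵥ v) ⬝ᵥ (W *ᵥ v) + (Z *ᵥ v) ⬝ᵥ (Z *ᵥ v) = 0 := by
    have := congrArg (fun w => v ⬝ᵥ w) hSv
    simpa [Matrix.add_mulVec, ← Matrix.mulVec_mulVec, dotProduct_add,
      Matrix.dotProduct_mulVec, Matrix.vecMul_transpose] using this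
  have hWn : (0:ℝ) ≤ (W *ᵥ v) ⬝ᵥ (W *ᵥ v) :=
    Finset.sum_nonneg fun i _ => mul_self_nonneg _
  have hZn : (0:ℝ) ≤ (Z *ᵥ v) ⬝ᵥ (Z *ᵥ v) :=
    Finset.sum_nonneg fun i _ => mul_self_nonneg _
  have h1 : (W *ᵥ v) ⬝ᵥ (W *ᵥ v) = 0 := by linarith
  have h2 : (Z *ᵥ v) ⬝ᵥ (Z *ᵥ v) = 0 := by linarith
  exact hv (hker v (dotProduct_self_eq_zero.1 h2)
    (dotProduct_self_eq_zero.1 h1))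

/-- For a Lagrangian frame, the complex matrix `W + i Z` is nonsingular. -/
lemma complex_shift_det_ne_zero {n : ℕ} (Z W : Matrix (Fin n) (Fin n) ℝ)
    (hsym : Z.transpose * W = W.transpose * Z)
    (hker : ∀ v : Fin n → ℝ, Z.mulVec v = 0 → W.mulVec v = 0 → v = 0) :
    (W.map (Complex.ofReal) + Complex.I • Z.map (Complex.ofReal)).det ≠ 0 := by
  have hS := gram_det_ne_zero_of_trivial_kernel Z W hker
  have mm : ∀ P Q : Matrix (Fin n) (Fin n) ℝ,
      (P * Q).map (Complex.ofReal : ℝ → ℂ) = P.map Complex.ofReal * Q.map Complex.ofReal := by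
    intro P Q; ext i j; simp [Matrix.mul_apply, Matrix.map_apply]
  set A := W.map (Complex.ofReal : ℝ → ℂ)
  set B := Z.map (Complex.ofReal : ℝ → ℂ)
  set M := A + Complex.I • B with hM
  have hAH : Aᴴ = Wᵀ.map Complex.ofReal := by
    ext i j; simp [A, Matrix.conjTranspose_apply, Complex.conj_ofReal]
  have hBH : Bᴴ = Zᵀ.map Complex.ofReal := by
    ext i j; simp [B, Matrix.conjTranspose_apply, Complex.conj_ofReal]
  have hcross : Wᵀ.map Complex.ofReal * B = Zᵀ.map Complex.ofReal * A := by
    have := congrArg (fun X => X.map (Complex.ofReal : ℝ → ℂ)) hsym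
    simp only [mm] at this
    exact this.symm
  have key : Mᴴ * M = (Wᵀ * W + Zᵀ * Z).map Complex.ofReal := by
    have hMH : Mᴴ = Wᵀ.map Complex.ofReal - Complex.I • Zᵀ.map Complex.ofReal := by
      simp [M, Matrix.conjTranspose_add, Matrix.conjTranspose_smul, hAH, hBH,
        Complex.conj_I, neg_smul, sub_eq_add_neg]
    rw [hMH, hM, Matrix.sub_mul, Matrix.mul_add, Matrix.mul_add, Matrix.smul_mul,
      Matrix.smul_mul, Matrix.mul_smul, Matrix.mul_smul, smul_smul, Complex.I_mul_I,
      neg_one_smul, hcross, Matrix.map_add Complex.ofReal (fun a b => Complex.ofReal_add a b),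
      mm, mm]
    abel
  intro hdet
  have h0 : (Mᴴ * M).det = 0 := by rw [Matrix.det_mul, hdet, mul_zero]
  rw [key] at h0
  have : ((Wᵀ * W + Zᵀ * Z).det : ℂ) = 0 := by
    rw [show ((Wᵀ * W + Zᵀ * Z).det : ℂ) = Complex.ofRealHom (Wᵀ * W + Zᵀ * Z).det from rfl,
      RingHom.map_det]
    exact h0
  exact hS (by exact_mod_cast this)

/-- Let `Z, W` be real `n×n` matrices with `ZᵀW = WᵀZ` (a Lagrangian frame condition) and
`ker Z ∩ ker W = {0}`.  Then `det(W + c·Z)` vanishes for at most `n` values of `c`;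
in particular `W + c·Z` is invertible for all but at most `n` real values of `c`. -/
theorem finite_degenerate_shifts_of_lagrangian_frame
    {n : ℕ} (hn : 1 ≤ n) (Z W : Matrix (Fin n) (Fin n) ℝ)
    (hsym : Z.transpose * W = W.transpose * Z)
    (hker : ∀ v : Fin n → ℝ, Z.mulVec v = 0 → W.mulVec v = 0 → v = 0) :
    {c : ℝ | (W + c • Z).det = 0}.Finite ∧
      {c : ℝ | (W + c • Z).det = 0}.ncard ≤ n := by
  have hI := complex_shift_det_ne_zero Z W hsym hker
  set N : Matrix (Fin n) (Fin n) ℝ[X] := (X : ℝ[X]) • Z.map C + W.map C with hN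
  set P : ℝ[X] := N.det with hP
  have hdeg : P.natDegree ≤ n := by
    simpa using Polynomial.natDegree_det_X_add_C_le Z W
  have heval : ∀ c : ℝ, P.eval c = (W + c • Z).det := by
    intro c
    have h1 := RingHom.map_det (evalRingHom c) N
    rw [RingHom.mapMatrix_apply] at h1
    have h2 : N.map (evalRingHom c) = W + c • Z := by
      ext i j
      simp only [hN, Matrix.map_apply, Matrix.add_apply, Matrix.smul_apply, smul_eq_mul,
        coe_evalRingHom, eval_add, eval_mul, eval_X, eval_C]
      ring
    rw [show P.eval c = (evalRingHom c) P from rfl, hP, h1, h2]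
  have hP0 : P ≠ 0 := by
    intro h
    apply hI
    have h1 := RingHom.map_det (Polynomial.aeval Complex.I).toRingHom N
    rw [RingHom.mapMatrix_apply] at h1
    have h2 : N.map (Polynomial.aeval Complex.I).toRingHom
        = W.map Complex.ofReal + Complex.I • Z.map Complex.ofReal := by
      ext i j
      simp only [hN, Matrix.map_apply, Matrix.add_apply, Matrix.smul_apply, smul_eq_mul,
        AlgHom.toRingHom_eq_coe, RingHom.coe_coe, map_add, _root_.map_mul, aeval_X, aeval_C,
        Complex.coe_algebraMap]
      ring
    rw [h2] at h1
    rw [← hP, h, map_zero] at h1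
    exact h1.symm
  have hset : {c : ℝ | (W + c • Z).det = 0} = ↑P.roots.toFinset := by
    ext c
    simp [Set.mem_setOf_eq, Multiset.mem_toFinset, Polynomial.mem_roots hP0,
      Polynomial.IsRoot, heval c]
  rw [hset]
  refine ⟨Finset.finite_toSet _, ?_⟩
  rw [Set.ncard_coe_finset]
  exact le_trans (Multiset.toFinset_card_le _) (le_trans (Polynomial.card_roots' P) hdeg)
end

section
/- Let (X, μ) and (Y, ν) be σ-finite measure spaces and let B ⊆ X × Y be measurable for the product σ-algebra. Suppose there exist measurable functions G : X → ℝ and H : Y → ℝ such that the indicator function 1_B equals (x,y) ↦ G(x) (μ×ν)-almost everywhere and also equals (x,y) ↦ H(y) (μ×ν)-almost everywhere. Then either (μ×ν)(B) = 0 or (μ×ν)((X×Y) ∖ B) = 0. -/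
open MeasureTheory

/-- If the indicator of a measurable set `B ⊆ X × Y` agrees `(μ×ν)`-a.e. with a function
of `x` alone and also with a function of `y` alone, then `B` has zero or full
`(μ×ν)`-measure. -/
theorem zero_or_full_of_indicator_depends_on_each_factor
    {X Y : Type*} [MeasurableSpace X] [MeasurableSpace Y]
    (μ : Measure X) (ν : Measure Y) [SigmaFinite μ] [SigmaFinite ν]
    (B : Set (X × Y)) (hB : MeasurableSet B)
    (G : X → ℝ) (hG : Measurable G) (H : Y → ℝ) (hH : Measurable H)
    (h1 : (fun p : X × Y => B.indicator (fun _ => (1 : ℝ)) p)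
        =ᵐ[μ.prod ν] fun p => G p.1)
    (h2 : (fun p : X × Y => B.indicator (fun _ => (1 : ℝ)) p)
        =ᵐ[μ.prod ν] fun p => H p.2) :
    (μ.prod ν) B = 0 ∨ (μ.prod ν) Bᶜ = 0 := by
  set A : Set X := G ⁻¹' {1} with hAdef
  set C : Set Y := H ⁻¹' {1} with hCdef
  have hBA : B =ᵐ[μ.prod ν] (A ×ˢ (Set.univ : Set Y)) := by
    rw [Filter.eventuallyEq_set]
    filter_upwards [h1] with p hp
    simp only [Set.mem_prod, Set.mem_preimage, Set.mem_singleton_iff, Set.mem_univ, and_true,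
      hAdef]
    by_cases hpB : p ∈ B
    · simp only [Set.indicator_of_mem hpB] at hp
      simpa [hpB] using hp.symm
    · simp only [Set.indicator_of_notMem hpB] at hp
      constructor
      · intro h; exact absurd h hpB
      · intro h; rw [← hp] at h; norm_num at h
  have hBC : B =ᵐ[μ.prod ν] ((Set.univ : Set X) ×ˢ C) := by
    rw [Filter.eventuallyEq_set]
    filter_upwards [h2] with p hp
    simp only [Set.mem_prod, Set.mem_preimage, Set.mem_singleton_iff, Set.mem_univ, true_and,
      hCdef]
    by_cases hpB : p ∈ B
    · simp only [Set.indicator_of_mem hpB] at hp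
      simpa [hpB] using hp.symm
    · simp only [Set.indicator_of_notMem hpB] at hp
      constructor
      · intro h; exact absurd h hpB
      · intro h; rw [← hp] at h; norm_num at h
  have hAC : (A ×ˢ (Set.univ : Set Y)) =ᵐ[μ.prod ν] ((Set.univ : Set X) ×ˢ C) :=
    hBA.symm.trans hBC
  have hdiff : (μ.prod ν) ((A ×ˢ (Set.univ : Set Y)) \ ((Set.univ : Set X) ×ˢ C)) = 0 :=
    (ae_eq_set.mp hAC).1
  have hsub : A ×ˢ Cᶜ ⊆ (A ×ˢ (Set.univ : Set Y)) \ ((Set.univ : Set X) ×ˢ C) := by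
    rintro ⟨x, y⟩ ⟨hx, hy⟩
    exact ⟨⟨hx, trivial⟩, fun h => hy h.2⟩
  have hprod0 : μ A * ν Cᶜ = 0 := by
    rw [← Measure.prod_prod]
    exact measure_mono_null hsub hdiff
  rcases mul_eq_zero.mp hprod0 with hA0 | hC0
  · left
    rw [measure_congr hBA, Measure.prod_prod, hA0, zero_mul]
  · right
    have hcompl : ((Set.univ : Set X) ×ˢ C)ᶜ = (Set.univ : Set X) ×ˢ Cᶜ := by
      ext ⟨x, y⟩; simp
    rw [measure_congr hBC.compl, hcompl, Measure.prod_prod, hC0, mul_zero]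
end

section
/- Let T > 0, let 𝕊 = ℝ/Tℤ be the circle of length T equipped with its normalized Haar probability measure μ, let (Y, ν) be a σ-finite measure space, let B ⊆ 𝕊 × Y be measurable for the product σ-algebra, and let ρ : Y → ℝ be measurable. Assume that for ν-almost every y ∈ Y: (i) ρ(y)/T is irrational, and (ii) the slice B_y := {s ∈ 𝕊 : (s, y) ∈ B} is invariant mod null sets under translation by ρ(y), i.e. μ((ρ(y) + B_y) Δ B_y) = 0. Then for ν-almost every y one has μ(B_y) ∈ {0, 1}, and B agrees (μ×ν)-almost everywhere with the product set 𝕊 × E, where E := {y ∈ Y : μ(B_y) = 1}. -/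
open MeasureTheory

private lemma denseRange_zsmul_coe_of_irrational {T : ℝ} (hT : 0 < T) {a : ℝ}
    (h : Irrational (a / T)) :
    DenseRange (fun n : ℤ => n • ((a : ℝ) : AddCircle T)) := by
  have hTne : T ≠ 0 := ne_of_gt hT
  have hd : Dense ((AddSubgroup.closure {a, T} : AddSubgroup ℝ) : Set ℝ) := by
    rcases (AddSubgroup.closure {a, T}).dense_or_cyclic with hd | ⟨g, hg⟩
    · exact hd
    · exfalso
      have ha : a ∈ AddSubgroup.closure ({g} : Set ℝ) := by
        rw [← hg]; exact AddSubgroup.subset_closure (by simp)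
      have hT' : T ∈ AddSubgroup.closure ({g} : Set ℝ) := by
        rw [← hg]; exact AddSubgroup.subset_closure (by simp)
      rw [AddSubgroup.mem_closure_singleton] at ha hT'
      obtain ⟨m, hm⟩ := ha; obtain ⟨n, hn⟩ := hT'
      have hg0 : g ≠ 0 := by rintro rfl; simp at hn; exact hTne hn.symm
      refine h ⟨(m : ℚ)/(n : ℚ), ?_⟩
      push_cast
      rw [← hm, ← hn, zsmul_eq_mul, zsmul_eq_mul, mul_div_mul_right _ _ hg0]
  let f : ℝ →+ AddCircle T := QuotientAddGroup.mk' (AddSubgroup.zmultiples T)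
  have hcont : Continuous f := continuous_quotient_mk'
  have hsur : DenseRange f := (QuotientAddGroup.mk'_surjective _).denseRange
  have himg : Dense (f '' ((AddSubgroup.closure {a, T} : AddSubgroup ℝ) : Set ℝ)) :=
    hsur.dense_image hcont hd
  have hmap : (AddSubgroup.map f (AddSubgroup.closure {a, T}) : Set (AddCircle T)) =
      f '' ((AddSubgroup.closure {a, T} : AddSubgroup ℝ) : Set ℝ) := by
    simp [AddSubgroup.coe_map]
  have hclos : AddSubgroup.map f (AddSubgroup.closure {a, T}) =
      AddSubgroup.zmultiples ((a : ℝ) : AddCircle T) := by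
    rw [AddMonoidHom.map_closure]
    have h0 : f T = 0 := by
      simpa [f] using (QuotientAddGroup.eq_zero_iff T).2 (AddSubgroup.mem_zmultiples T)
    have himage : f '' {a, T} = {((a : ℝ) : AddCircle T), 0} := by
      simp [Set.image_insert_eq, h0]; rfl
    have e1 : AddSubgroup.closure ({((a : ℝ) : AddCircle T), 0} : Set (AddCircle T)) =
        AddSubgroup.closure {((a : ℝ) : AddCircle T)} := by
      apply le_antisymm
      · rw [AddSubgroup.closure_le]
        rintro x (rfl | rfl)
        · exact AddSubgroup.subset_closure rfl
        · exact (AddSubgroup.closure _).zero_mem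
      · exact AddSubgroup.closure_mono (by simp)
    rw [himage, e1, ← AddSubgroup.zmultiples_eq_closure]
  have hrange : Set.range (fun n : ℤ => n • ((a : ℝ) : AddCircle T)) =
      (AddSubgroup.zmultiples ((a : ℝ) : AddCircle T) : Set (AddCircle T)) := by
    ext x; simp [AddSubgroup.mem_zmultiples_iff, eq_comm]
  rw [DenseRange, hrange, ← hclos, hmap]
  exact himg


/-- Let `𝕊 = ℝ/Tℤ` carry its normalized Haar probability measure `μ`, let `(Y, ν)` be a
σ-finite measure space, `B ⊆ 𝕊 × Y` a measurable set and `ρ : Y → ℝ` measurable.  If for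
ν-a.e. `y` the number `ρ(y)/T` is irrational and the slice `B_y` is invariant mod null
sets under translation by `ρ(y)`, then for ν-a.e. `y` the slice `B_y` has measure `0` or
`1`, and `B` agrees `(μ×ν)`-a.e. with the product set `𝕊 × E`, `E = {y : μ(B_y) = 1}`. -/
theorem invariant_set_saturated_by_circle_foliation
    {Y : Type*} [MeasurableSpace Y] (ν : Measure Y) [SigmaFinite ν]
    (T : ℝ) [hT : Fact (0 < T)]
    (μ : Measure (AddCircle T)) (hμ : μ = (ENNReal.ofReal T)⁻¹ • volume)
    (B : Set (AddCircle T × Y)) (hB : MeasurableSet B)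
    (ρ : Y → ℝ) (hρ : Measurable ρ)
    (h1 : ∀ᵐ y ∂ν, Irrational (ρ y / T))
    (h2 : ∀ᵐ y ∂ν,
      μ (symmDiff ((fun s : AddCircle T => ((ρ y : ℝ) : AddCircle T) + s) ''
          {s : AddCircle T | (s, y) ∈ B}) {s : AddCircle T | (s, y) ∈ B}) = 0) :
    (∀ᵐ y ∂ν, μ {s : AddCircle T | (s, y) ∈ B} = 0 ∨ μ {s : AddCircle T | (s, y) ∈ B} = 1) ∧
    (μ.prod ν) (symmDiff B
        (Set.univ ×ˢ {y : Y | μ {s : AddCircle T | (s, y) ∈ B} = 1})) = 0 := by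
  have hT0 : (0:ℝ) < T := hT.out
  have hprob : IsProbabilityMeasure μ := by
    constructor
    rw [hμ]
    simp only [Measure.smul_apply, AddCircle.measure_univ, smul_eq_mul]
    exact ENNReal.inv_mul_cancel (by simp [hT0]) ENNReal.ofReal_ne_top
  have hinv : μ.IsAddLeftInvariant := by rw [hμ]; infer_instance
  have hreg : μ.InnerRegular := by rw [hμ]; infer_instance
  -- ergodicity of the rotations
  have herg : ∀ b : ℝ, Irrational (b / T) →
      Ergodic (fun s : AddCircle T => ((b : ℝ) : AddCircle T) + s) μ := fun b hb =>
    ergodic_add_left_of_denseRange_zsmul (denseRange_zsmul_coe_of_irrational hT0 hb) μ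
  have hslice : ∀ y : Y, MeasurableSet {s : AddCircle T | (s, y) ∈ B} := fun y =>
    measurable_prodMk_right hB
  have hae : ∀ᵐ y ∂ν,
      μ {s : AddCircle T | (s, y) ∈ B} = 0 ∨ μ {s : AddCircle T | (s, y) ∈ B} = 1 := by
    filter_upwards [h1, h2] with y hy1 hy2
    set s := {s : AddCircle T | (s, y) ∈ B} with hs
    have hirr : Irrational ((-(ρ y)) / T) := by rw [neg_div]; exact hy1.neg
    have herg' := herg (-(ρ y)) hirr
    have him : (fun z : AddCircle T => ((ρ y : ℝ) : AddCircle T) + z) '' s =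
        (fun z : AddCircle T => ((-(ρ y) : ℝ) : AddCircle T) + z) ⁻¹' s := by
      ext z
      simp only [Set.mem_image, Set.mem_preimage]
      constructor
      · rintro ⟨w, hw, rfl⟩
        rw [AddCircle.coe_neg, neg_add_cancel_left]
        exact hw
      · intro hz
        refine ⟨((-(ρ y) : ℝ) : AddCircle T) + z, hz, ?_⟩
        rw [AddCircle.coe_neg, add_neg_cancel_left]
    rw [him] at hy2
    have heq : (fun z : AddCircle T => ((-(ρ y) : ℝ) : AddCircle T) + z) ⁻¹' s =ᵐ[μ] s :=
      (measure_symmDiff_eq_zero_iff).1 hy2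
    rcases herg'.quasiErgodic.ae_empty_or_univ₀ (hslice y).nullMeasurableSet heq with h | h
    · left
      rw [measure_congr h, measure_empty]
    · right
      rw [measure_congr h, measure_univ]
  refine ⟨hae, ?_⟩
  haveI : SFinite μ := inferInstance
  set E : Set Y := {y : Y | μ {s : AddCircle T | (s, y) ∈ B} = 1} with hE
  have hEm : MeasurableSet E := by
    have := measurable_measure_prodMk_right (μ := μ) hB
    exact this (measurableSet_singleton 1)
  have hSD : MeasurableSet (symmDiff B (Set.univ ×ˢ E)) :=
    hB.symmDiff (MeasurableSet.univ.prod hEm)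
  rw [Measure.prod_apply_symm hSD]
  rw [lintegral_eq_zero_iff (measurable_measure_prodMk_right hSD)]
  filter_upwards [hae] with y hy
  have hpre : (fun x : AddCircle T => (x, y)) ⁻¹' (symmDiff B (Set.univ ×ˢ E)) =
      symmDiff {s : AddCircle T | (s, y) ∈ B}
        ((fun x : AddCircle T => (x, y)) ⁻¹' (Set.univ ×ˢ E)) := by
    simp only [Set.symmDiff_def, Set.preimage_union, Set.preimage_diff]
    rfl
  by_cases hyE : y ∈ E
  · have h1' : (fun x : AddCircle T => (x, y)) ⁻¹' (Set.univ ×ˢ E) = Set.univ := by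
      ext x; simp [hyE]
    rw [hpre, h1', ← Set.top_eq_univ, symmDiff_top]
    exact (prob_compl_eq_zero_iff (hslice y)).2 hyE
  · have h0' : (fun x : AddCircle T => (x, y)) ⁻¹' (Set.univ ×ˢ E) = (∅ : Set (AddCircle T)) := by
      ext x; simp [hyE]
    have hμ0 : μ {s : AddCircle T | (s, y) ∈ B} = 0 := by
      rcases hy with h | h
      · exact h
      · exact absurd h hyE
    rw [hpre, h0', ← Set.bot_eq_empty, symmDiff_bot]
    exact hμ0
end
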